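/- arXiv:2003.12965 — 4 statements merged into one kernel-verified Lean document; each statement's English description precedes it below -/
import Mathlib

section
/- With g as defined (multiplicative on squarefree integers, g(p)=0 for p ≤ e², g(p)=⌊p/log p⌋ for p > e²), one has ∑_{q ≤ x} g(q) = O(x² / (log x)²) as x → ∞. -/
open Real Finset

/-!
Write `S(n) = ∑_{q ≤ n} g(q)`; we show `S(n) ≤ 10⁸ n² / log² n` for every `n ≥ 2` by strong
induction. Splitting off the smallest prime factor `p` of a composite `q ≤ n` gives
`S(n) ≤ 1 + ∑_{p ≤ n} g(p) + ∑_{p² ≤ n} g(p) S(n / p)`. Since `g(p) ≤ p / log p` and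
`t / log² t` increases beyond `e²`, the prime sum is at most `θ(n) n / log² n ≤ log 4 · n² / log² n`
(Chebyshev). By induction the last sum is at most `10⁸ n² / log² n` times
`∑ (log n / log (n / p))² / (p log p)` over primes `e² < p ≤ √n`. Partial summation against
`θ(t) ≤ t log 4` bounds `∑_{p > P} 1 / (p log p)` by `log 4 (1 / log P + 1 / log² P)`: the primes
`p ≤ n^{1/20}` (all at least `11 > e^{7/3}`) contribute less than `0.95`, the larger ones
`O(1 / log n)`, so the weight stays below `24/25` once `log n ≥ 10⁴`. For smaller `n` the trivial
bound `S(n) ≤ n²` suffices.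
-/

/-- The multiplicative function `g` supported on squarefree integers with
`g(p) = 0` for primes `p ≤ e²` and `g(p) = ⌊p / log p⌋` for primes `p > e²`. -/
noncomputable def weirdG (q : ℕ) : ℝ :=
  if Squarefree q then
    ∏ p ∈ q.primeFactors,
      (if (p : ℝ) ≤ Real.exp 2 then 0 else (⌊(p : ℝ) / Real.log p⌋ : ℝ))
  else 0

lemma weirdG_prime {p : ℕ} (hp : p.Prime) :
    weirdG p = if (p : ℝ) ≤ exp 2 then 0 else (⌊(p : ℝ) / log p⌋ : ℝ) := by
  rw [weirdG, if_pos hp.squarefree, hp.primeFactors, prod_singleton]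

lemma weirdG_prime_nonneg {p : ℕ} (hp : p.Prime) : 0 ≤ weirdG p := by
  rw [weirdG_prime hp]
  split_ifs
  · exact le_rfl
  · exact_mod_cast Int.floor_nonneg.2 (by positivity)

lemma weirdG_prime_le {p : ℕ} (hp : p.Prime) : weirdG p ≤ p / log p := by
  rw [weirdG_prime hp]
  split_ifs
  · positivity
  · exact Int.floor_le _

lemma weirdG_prime_le_self {p : ℕ} (hp : p.Prime) : weirdG p ≤ p := by
  rw [weirdG_prime hp]
  split_ifs with hpe
  · positivity
  · have hlog : 1 ≤ log p := by
      rw [le_log_iff_exp_le ((exp_pos 2).trans (not_le.1 hpe))]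
      exact (exp_le_exp.2 one_le_two).trans (not_le.1 hpe).le
    exact (Int.floor_le _).trans (div_le_self (by positivity) hlog)

lemma weirdG_eq_prod {q : ℕ} (hq : Squarefree q) :
    weirdG q = ∏ p ∈ q.primeFactors, weirdG p := by
  rw [weirdG, if_pos hq]
  exact prod_congr rfl fun p hp => (weirdG_prime (Nat.prime_of_mem_primeFactors hp)).symm

lemma weirdG_nonneg (q : ℕ) : 0 ≤ weirdG q := by
  by_cases hq : Squarefree q
  · rw [weirdG_eq_prod hq]
    exact prod_nonneg fun p hp => weirdG_prime_nonneg (Nat.prime_of_mem_primeFactors hp)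
  · rw [weirdG, if_neg hq]

lemma weirdG_one : weirdG 1 = 1 := by simp [weirdG]

lemma weirdG_le_self (q : ℕ) : weirdG q ≤ q := by
  by_cases hq : Squarefree q
  · calc weirdG q = ∏ p ∈ q.primeFactors, weirdG p := weirdG_eq_prod hq
      _ ≤ ∏ p ∈ q.primeFactors, (p : ℝ) :=
        prod_le_prod (fun p hp => weirdG_prime_nonneg (Nat.prime_of_mem_primeFactors hp))
          fun p hp => weirdG_prime_le_self (Nat.prime_of_mem_primeFactors hp)
      _ = q := by rw [← Nat.cast_prod, Nat.prod_primeFactors_of_squarefree hq]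
  · rw [weirdG, if_neg hq]
    positivity

lemma weirdG_mul_le (a b : ℕ) : weirdG (a * b) ≤ weirdG a * weirdG b := by
  by_cases h : Squarefree (a * b)
  · obtain ⟨hab, ha, hb⟩ := Nat.squarefree_mul_iff.1 h
    rw [weirdG_eq_prod h, weirdG_eq_prod ha, weirdG_eq_prod hb, hab.primeFactors_mul,
      prod_union hab.disjoint_primeFactors]
  · rw [weirdG, if_neg h]
    exact mul_nonneg (weirdG_nonneg a) (weirdG_nonneg b)

lemma seven_lt_exp_two : (7 : ℝ) < exp 2 := by
  have : exp 2 = exp 1 ^ 2 := by rw [← exp_nat_mul]; norm_num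
  nlinarith [exp_one_gt_d9]

lemma exp_seven_thirds_lt_eleven : exp (7 / 3) < 11 := by
  have h : exp (7 / 3) ^ 3 = exp 1 ^ 7 := by rw [← exp_nat_mul, ← exp_nat_mul]; norm_num
  have : exp 1 ^ 7 < 11 ^ 3 :=
    (pow_lt_pow_left₀ exp_one_lt_d9 (exp_pos 1).le (by norm_num)).trans (by norm_num)
  exact lt_of_pow_lt_pow_left₀ 3 (by norm_num) (h ▸ this)

lemma log_four_lt : log 4 < 1.3863 := by
  have : log 4 = 2 * log 2 := by
    rw [show (4 : ℝ) = 2 ^ 2 by norm_num, log_pow]; norm_num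
  linarith [log_two_lt_d9]

lemma eleven_le_of_prime_of_eight_le {p : ℕ} (hp : p.Prime) (h8 : 8 ≤ p) : 11 ≤ p := by
  by_contra! h
  interval_cases p <;> norm_num at hp

lemma weirdG_prime_eq_zero {p : ℕ} (hp : p.Prime) (h8 : p < 8) : weirdG p = 0 := by
  have : (p : ℝ) ≤ exp 2 := by
    have : (p : ℝ) ≤ 7 := by exact_mod_cast Nat.le_of_lt_succ h8
    linarith [seven_lt_exp_two]
  rw [weirdG_prime hp, if_pos this]

lemma monotoneOn_inv_sq {f : ℝ → ℝ} {s : Set ℝ} (hf : AntitoneOn f s)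
    (hpos : ∀ t ∈ s, 0 < f t) : MonotoneOn (fun t => (f t ^ 2)⁻¹) s :=
  fun _ ha _ hb hab =>
    inv_anti₀ (pow_pos (hpos _ hb) 2) (pow_le_pow_left₀ (hpos _ hb).le (hf ha hb hab) 2)

lemma monotoneOn_div_log_sq : MonotoneOn (fun t : ℝ => t / log t ^ 2) (Set.Ici (exp 2)) := by
  have hlog : ∀ t ∈ Set.Ici (exp 2), 0 < log t := fun t ht =>
    (by norm_num : (0 : ℝ) < 2).trans_le ((le_log_iff_exp_le ((exp_pos 2).trans_le ht)).2 ht)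
  refine (monotoneOn_inv_sq log_div_sqrt_antitoneOn fun t ht => ?_).congr fun t ht => ?_
  · have := hlog t ht
    have : 0 < t := (exp_pos 2).trans_le ht
    positivity
  · simp only
    rw [div_pow, sq_sqrt ((exp_pos 2).trans_le ht).le, inv_div]

lemma monotoneOn_sq_div_log_sq :
    MonotoneOn (fun t : ℝ => t ^ 2 / log t ^ 2) (Set.Ici (exp 1)) := by
  refine (monotoneOn_inv_sq log_div_self_antitoneOn fun t ht => ?_).congr fun t ht => ?_
  · have : 0 < t := (exp_pos 1).trans_le ht
    have : 0 < log t := log_pos ((one_lt_exp_iff.2 one_pos).trans_le ht)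
    positivity
  · simp only
    rw [div_pow, inv_div]

lemma sq_div_le_of_mul_le {c L M : ℝ} (hc : 0 < c) (hL : 0 ≤ L) (h : c * L ≤ M) :
    (L / M) ^ 2 ≤ c⁻¹ ^ 2 := by
  rcases hL.eq_or_lt with rfl | hL
  · simpa using sq_nonneg c⁻¹
  · have hM : 0 < M := (mul_pos hc hL).trans_le h
    refine pow_le_pow_left₀ (div_nonneg hL.le hM.le) ?_ 2
    rw [div_le_iff₀ hM, inv_mul_eq_div, le_div_iff₀ hc]
    linarith

lemma sum_log_le_log_four_mul {F : Finset ℕ} (hF : ∀ p ∈ F, p.Prime) {t : ℝ} (ht : 0 ≤ t)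
    (hFt : ∀ p ∈ F, (p : ℝ) ≤ t) : ∑ p ∈ F, log p ≤ log 4 * t := by
  refine le_trans ?_ (Chebyshev.theta_le_log4_mul_x ht)
  refine sum_le_sum_of_subset_of_nonneg (fun p hp => ?_) fun p _ _ => log_natCast_nonneg p
  simp only [mem_filter, mem_Ioc]
  exact ⟨⟨(hF p hp).pos, Nat.le_floor (hFt p hp)⟩, hF p hp⟩

section AbelSummation

variable {P : ℝ} {h Φ : ℝ → ℝ}

lemma sum_log_mul_le_sum_log_mul_add (hP : 0 ≤ P) (h_anti : AntitoneOn h (Set.Ici P))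
    (hΦ : ∀ a b, P ≤ a → a ≤ b → a * (h a - h b) ≤ Φ a - Φ b)
    {F : Finset ℕ} (hF : ∀ p ∈ F, p.Prime) (hFP : ∀ p ∈ F, P < p)
    {b : ℝ} (hb : P ≤ b) (hFb : ∀ p ∈ F, (p : ℝ) ≤ b) :
    ∑ p ∈ F, log p * h p ≤ (∑ p ∈ F, log p) * h b + log 4 * (Φ P - Φ b) := by
  induction F using Finset.induction_on_max generalizing b with
  | empty =>
    have : P * (h P - h b) ≤ Φ P - Φ b := hΦ P b le_rfl hb
    have : 0 ≤ P * (h P - h b) := mul_nonneg hP (sub_nonneg.2 (h_anti (le_refl P) hb hb))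
    simp only [sum_empty, zero_mul, zero_add]
    exact mul_nonneg (log_nonneg (by norm_num)) (by linarith)
  | insert a s has ih =>
    have hsa : a ∉ s := fun ha => lt_irrefl a (has a ha)
    have hPa : P < a := hFP a (mem_insert_self a s)
    have hab : (a : ℝ) ≤ b := hFb a (mem_insert_self a s)
    have ih_a := ih (fun p hp => hF p (mem_insert_of_mem hp))
      (fun p hp => hFP p (mem_insert_of_mem hp)) hPa.le fun p hp => by exact_mod_cast (has p hp).le
    have hθ : ∑ p ∈ insert a s, log p ≤ log 4 * a :=
      sum_log_le_log_four_mul hF (by linarith) fun p hp => by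
        rcases mem_insert.1 hp with rfl | hp
        · exact le_rfl
        · exact_mod_cast (has p hp).le
    have hstep : (∑ p ∈ insert a s, log p) * (h a - h b) ≤ log 4 * (Φ a - Φ b) :=
      calc (∑ p ∈ insert a s, log p) * (h a - h b) ≤ log 4 * a * (h a - h b) :=
            mul_le_mul_of_nonneg_right hθ (sub_nonneg.2 (h_anti hPa.le (hPa.le.trans hab) hab))
        _ ≤ log 4 * (Φ a - Φ b) := by
            rw [mul_assoc]
            exact mul_le_mul_of_nonneg_left (hΦ a b hPa.le hab) (log_nonneg (by norm_num))
    rw [sum_insert hsa, sum_insert hsa] at *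
    linarith

theorem sum_log_mul_le (hP : 0 ≤ P) (h_nonneg : ∀ t, P ≤ t → 0 ≤ h t)
    (h_anti : AntitoneOn h (Set.Ici P)) (hΦ : ∀ a b, P ≤ a → a ≤ b → a * (h a - h b) ≤ Φ a - Φ b)
    (hhΦ : ∀ t, P ≤ t → t * h t ≤ Φ t) {F : Finset ℕ} (hF : ∀ p ∈ F, p.Prime)
    (hFP : ∀ p ∈ F, P < p) :
    ∑ p ∈ F, log p * h p ≤ log 4 * Φ P := by
  set b : ℝ := max P (F.sup id : ℕ)
  have hb : P ≤ b := le_max_left _ _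
  have hFb : ∀ p ∈ F, (p : ℝ) ≤ b := fun p hp =>
    le_max_of_le_right (by exact_mod_cast le_sup (f := id) hp)
  have hθ : (∑ p ∈ F, log p) * h b ≤ log 4 * b * h b :=
    mul_le_mul_of_nonneg_right (sum_log_le_log_four_mul hF (hP.trans hb) hFb) (h_nonneg b hb)
  have hbΦ : log 4 * (b * h b) ≤ log 4 * Φ b :=
    mul_le_mul_of_nonneg_left (hhΦ b hb) (log_nonneg (by norm_num))
  have := sum_log_mul_le_sum_log_mul_add hP h_anti hΦ hF hFP hb hFb
  linarith

end AbelSummation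

-- `Φ t = 1 / log t + 1 / log² t` solves `Φ' = t h'` for `h t = 1 / (t log² t)`;
-- this is the discrete form of that identity.
lemma mul_inv_mul_log_sq_sub_le {a b : ℝ} (ha : 1 < a) (hab : a ≤ b) :
    a * (1 / (a * log a ^ 2) - 1 / (b * log b ^ 2)) ≤
      (1 / log a + 1 / log a ^ 2) - (1 / log b + 1 / log b ^ 2) := by
  have ha0 : 0 < a := by linarith
  have hb0 : 0 < b := by linarith
  set A := log a
  set B := log b
  have hA : 0 < A := log_pos ha
  have hB : 0 < B := hA.trans_le (log_le_log ha0 hab)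
  have hexp : 1 + (A - B) ≤ a / b := by
    rw [← exp_log (div_pos ha0 hb0), log_div ha0.ne' hb0.ne']
    linarith [add_one_le_exp (A - B)]
  have hkey : (B + 1 - B ^ 2 / A) / B ^ 2 ≤ (a / b) / B ^ 2 := by
    refine div_le_div_of_nonneg_right ?_ (sq_nonneg B)
    have : B + 1 - B ^ 2 / A = 1 + (A - B) - (B - A) ^ 2 / A := by field_simp; ring
    have : 0 ≤ (B - A) ^ 2 / A := by positivity
    linarith
  have e1 : a * (1 / (a * A ^ 2) - 1 / (b * B ^ 2)) = 1 / A ^ 2 - (a / b) / B ^ 2 := by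
    field_simp
  have e2 : (B + 1 - B ^ 2 / A) / B ^ 2 = 1 / B + 1 / B ^ 2 - 1 / A := by
    field_simp
  rw [e1]
  linarith

theorem sum_inv_mul_log_le {P : ℝ} (hP : 1 < P) {F : Finset ℕ} (hF : ∀ p ∈ F, p.Prime)
    (hFP : ∀ p ∈ F, P < p) :
    ∑ p ∈ F, 1 / (p * log p) ≤ log 4 * (1 / log P + 1 / log P ^ 2) := by
  have hlog : ∀ t, P ≤ t → 0 < log t := fun t ht => log_pos (hP.trans_le ht)
  have hsum : ∑ p ∈ F, 1 / (p * log p) = ∑ p ∈ F, log p * (1 / (p * log p ^ 2)) := by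
    refine sum_congr rfl fun p hp => ?_
    have := hlog p (hFP p hp).le
    field_simp
  rw [hsum]
  refine sum_log_mul_le (by linarith) (fun t ht => ?_) (fun a ha b hb hab => ?_)
    (fun a b ha hab => mul_inv_mul_log_sq_sub_le (hP.trans_le ha) hab) (fun t ht => ?_) hF hFP
  · have := hlog t ht
    have : 0 < t := by linarith
    positivity
  · have := hlog a ha
    have : 0 < a := by linarith [show P ≤ a from ha]
    have : log a ≤ log b := log_le_log (by linarith) hab
    apply one_div_le_one_div_of_le (by positivity)
    gcongr
    linarith
  · have := hlog t ht
    have : 0 < t := by linarith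
    have : t * (1 / (t * log t ^ 2)) = 1 / log t ^ 2 := by field_simp
    rw [this]
    have : 0 ≤ 1 / log t := by positivity
    linarith

lemma weirdG_prime_le_log_mul {p n : ℕ} (hp : p.Prime) (hpn : p ≤ n) :
    weirdG p ≤ log p * (n / log n ^ 2) := by
  by_cases hpe : (p : ℝ) ≤ exp 2
  · rw [weirdG_prime hp, if_pos hpe]
    exact mul_nonneg (log_natCast_nonneg p) (by positivity)
  · have hpe : exp 2 ≤ p := (not_le.1 hpe).le
    have hlog : 0 < log p := log_pos (by exact_mod_cast hp.one_lt)
    calc weirdG p ≤ p / log p := weirdG_prime_le hp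
      _ = log p * (p / log p ^ 2) := by field_simp
      _ ≤ log p * (n / log n ^ 2) := by
        have hpn : (p : ℝ) ≤ n := by exact_mod_cast hpn
        exact mul_le_mul_of_nonneg_left (monotoneOn_div_log_sq hpe (hpe.trans hpn) hpn) hlog.le

lemma sum_weirdG_prime_le (n : ℕ) :
    ∑ p ∈ (Icc 2 n).filter Nat.Prime, weirdG p ≤ log 4 * (n ^ 2 / log n ^ 2) := by
  have hmem : ∀ p ∈ (Icc 2 n).filter Nat.Prime, p.Prime ∧ p ≤ n := fun p hp =>
    ⟨(mem_filter.1 hp).2, (mem_Icc.1 (mem_filter.1 hp).1).2⟩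
  calc ∑ p ∈ (Icc 2 n).filter Nat.Prime, weirdG p
      ≤ ∑ p ∈ (Icc 2 n).filter Nat.Prime, log p * (n / log n ^ 2) :=
        sum_le_sum fun p hp => weirdG_prime_le_log_mul (hmem p hp).1 (hmem p hp).2
    _ = (∑ p ∈ (Icc 2 n).filter Nat.Prime, log p) * (n / log n ^ 2) := (sum_mul _ _ _).symm
    _ ≤ log 4 * n * (n / log n ^ 2) := by
        refine mul_le_mul_of_nonneg_right (sum_log_le_log_four_mul (fun p hp => (hmem p hp).1)
          (by positivity) fun p hp => by exact_mod_cast (hmem p hp).2) (by positivity)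
    _ = log 4 * (n ^ 2 / log n ^ 2) := by ring

noncomputable def weirdGSum (n : ℕ) : ℝ := ∑ q ∈ Icc 1 n, weirdG q

lemma weirdGSum_nonneg (n : ℕ) : 0 ≤ weirdGSum n := sum_nonneg fun q _ => weirdG_nonneg q

lemma weirdGSum_le_sq (n : ℕ) : weirdGSum n ≤ n ^ 2 :=
  calc weirdGSum n ≤ ∑ _q ∈ Icc 1 n, (n : ℝ) :=
        sum_le_sum fun q hq => (weirdG_le_self q).trans (by exact_mod_cast (mem_Icc.1 hq).2)
    _ = n ^ 2 := by simp [sq]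

lemma weirdGSum_eq {n : ℕ} (hn : 1 ≤ n) :
    weirdGSum n = 1 + ∑ q ∈ (Icc 2 n).filter Nat.Prime, weirdG q +
      ∑ q ∈ (Icc 2 n).filter (fun q => ¬ q.Prime), weirdG q := by
  rw [weirdGSum, ← insert_Icc_add_one_left_eq_Icc hn, sum_insert (by simp), weirdG_one,
    add_assoc, sum_filter_add_sum_filter_not]
  rfl

lemma sigma_minFac_mem {n q : ℕ} (hq : q ∈ Icc 2 n) (hqp : ¬ q.Prime) (h8 : 8 ≤ q.minFac) :
    (⟨q.minFac, q / q.minFac⟩ : (_ : ℕ) × ℕ) ∈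
      ((Icc 8 n).filter fun p => p.Prime ∧ p * p ≤ n).sigma fun p => Icc 1 (n / p) := by
  obtain ⟨hq2, hqn⟩ := mem_Icc.1 hq
  have hle : q.minFac ≤ q := Nat.minFac_le (by omega)
  have hsq : q.minFac * q.minFac ≤ q := by
    simpa [sq] using Nat.minFac_sq_le_self (by omega) hqp
  simp only [mem_sigma, mem_filter, mem_Icc]
  exact ⟨⟨⟨h8, by omega⟩, Nat.minFac_prime (by omega), by omega⟩,
    Nat.div_pos hle q.minFac_pos, Nat.div_le_div_right hqn⟩

lemma sum_weirdG_not_prime_le (n : ℕ) :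
    ∑ q ∈ (Icc 2 n).filter (fun q => ¬ q.Prime), weirdG q ≤
      ∑ p ∈ (Icc 8 n).filter (fun p => p.Prime ∧ p * p ≤ n), weirdG p * weirdGSum (n / p) := by
  set comp := (Icc 2 n).filter (fun q => ¬ q.Prime)
  let e : ℕ → (_ : ℕ) × ℕ := fun q => ⟨q.minFac, q / q.minFac⟩
  have he : ∀ q, (e q).1 * (e q).2 = q := fun q => Nat.mul_div_cancel' q.minFac_dvd
  calc ∑ q ∈ comp, weirdG q ≤ ∑ q ∈ comp, weirdG (e q).1 * weirdG (e q).2 :=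
        sum_le_sum fun q _ => by simpa only [he] using weirdG_mul_le (e q).1 (e q).2
    _ = ∑ q ∈ comp.filter (fun q => 8 ≤ q.minFac), weirdG (e q).1 * weirdG (e q).2 := by
        refine (sum_filter_of_ne fun q hq hne => not_lt.1 fun h8 => hne ?_).symm
        have hq1 : q ≠ 1 := by have := (mem_Icc.1 (mem_filter.1 hq).1).1; omega
        rw [weirdG_prime_eq_zero (Nat.minFac_prime hq1) h8, zero_mul]
    _ = ∑ x ∈ (comp.filter (fun q => 8 ≤ q.minFac)).image e, weirdG x.1 * weirdG x.2 :=
        (sum_image (f := fun x : (_ : ℕ) × ℕ => weirdG x.1 * weirdG x.2) (g := e)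
          fun q _ q' _ h => by rw [← he q, ← he q', h]).symm
    _ ≤ ∑ x ∈ ((Icc 8 n).filter fun p => p.Prime ∧ p * p ≤ n).sigma fun p => Icc 1 (n / p),
          weirdG x.1 * weirdG x.2 := by
        refine sum_le_sum_of_subset_of_nonneg (fun x hx => ?_)
          fun x _ _ => mul_nonneg (weirdG_nonneg _) (weirdG_nonneg _)
        obtain ⟨q, hq, rfl⟩ := mem_image.1 hx
        obtain ⟨hq, h8⟩ := mem_filter.1 hq
        exact sigma_minFac_mem (mem_filter.1 hq).1 (mem_filter.1 hq).2 h8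
    _ = ∑ p ∈ (Icc 8 n).filter (fun p => p.Prime ∧ p * p ≤ n), weirdG p * weirdGSum (n / p) := by
        rw [sum_sigma]
        simp only [weirdGSum, mul_sum]

lemma sum_inv_mul_log_mul_sq_le_of_forall {L c P : ℝ} (hL : 0 ≤ L) (hc : 0 < c) (hP : 1 < P)
    {M : ℕ → ℝ} {F : Finset ℕ} (hF : ∀ p ∈ F, p.Prime ∧ P < p ∧ c * L ≤ M p) :
    ∑ p ∈ F, 1 / (p * log p) * (L / M p) ^ 2 ≤
      log 4 * (1 / log P + 1 / log P ^ 2) * c⁻¹ ^ 2 :=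
  calc _ ≤ ∑ p ∈ F, 1 / (p * log p) * c⁻¹ ^ 2 :=
        sum_le_sum fun p hp => mul_le_mul_of_nonneg_left (sq_div_le_of_mul_le hc hL (hF p hp).2.2)
          (by have := log_natCast_nonneg p; positivity)
    _ = (∑ p ∈ F, 1 / (p * log p)) * c⁻¹ ^ 2 := (sum_mul _ _ _).symm
    _ ≤ _ := mul_le_mul_of_nonneg_right (sum_inv_mul_log_le hP (fun p hp => (hF p hp).1)
        fun p hp => (hF p hp).2.1) (by positivity)

lemma sum_inv_mul_log_mul_sq_le {n : ℕ} (hn : 10 ^ 4 ≤ log n) {F : Finset ℕ}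
    (hF : ∀ p ∈ F, p.Prime ∧ 8 ≤ p ∧ p * p ≤ n) :
    ∑ p ∈ F, 1 / (p * log p) * (log n / log (n / p)) ^ 2 ≤ 24 / 25 := by
  set L := log n
  have hn0 : (0 : ℝ) < n := Nat.cast_pos.2 (Nat.pos_of_ne_zero fun h => by norm_num [L, h] at hn)
  have hlog_div : ∀ p ∈ F, log (n / p) = L - log p := fun p hp =>
    log_div hn0.ne' (Nat.cast_pos.2 (hF p hp).1.pos).ne'
  have hI := sum_inv_mul_log_mul_sq_le_of_forall (L := L) (c := 19 / 20) (P := exp (7 / 3))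
    (M := fun p => log (n / p)) (F := F.filter fun p : ℕ => 20 * log p ≤ L) (by linarith)
    (by norm_num) (one_lt_exp_iff.2 (by norm_num)) fun p hp => by
      obtain ⟨hp, h20⟩ := mem_filter.1 hp
      obtain ⟨hpp, h8, -⟩ := hF p hp
      refine ⟨hpp, exp_seven_thirds_lt_eleven.trans_le ?_, ?_⟩
      · exact_mod_cast eleven_le_of_prime_of_eight_le hpp h8
      · rw [hlog_div p hp]
        linarith
  have hII := sum_inv_mul_log_mul_sq_le_of_forall (L := L) (c := 1 / 2) (P := exp (L / 20))
    (M := fun p => log (n / p)) (F := F.filter fun p : ℕ => ¬ 20 * log p ≤ L) (by linarith)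
    (by norm_num) (one_lt_exp_iff.2 (by linarith)) fun p hp => by
      obtain ⟨hp, h20⟩ := mem_filter.1 hp
      obtain ⟨hpp, -, hpn⟩ := hF p hp
      have hp0 : (0 : ℝ) < p := Nat.cast_pos.2 hpp.pos
      have h2 : 2 * log p ≤ L := by
        have := log_le_log (by positivity) (show (p : ℝ) * p ≤ n by exact_mod_cast hpn)
        rwa [log_mul hp0.ne' hp0.ne', ← two_mul] at this
      refine ⟨hpp, ?_, ?_⟩
      · rw [← exp_log hp0]
        exact exp_lt_exp.2 (by linarith)
      · rw [hlog_div p hp]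
        linarith
  rw [log_exp] at hI hII
  have hsmall : 1 / (L / 20) + 1 / (L / 20) ^ 2 ≤ 1 / 500 + 1 / 500 ^ 2 := by
    have : (500 : ℝ) ≤ L / 20 := by linarith
    gcongr
  have hlog4 : 0 ≤ log 4 := log_nonneg (by norm_num)
  rw [← sum_filter_add_sum_filter_not F (fun p : ℕ => 20 * log p ≤ L)]
  nlinarith [log_four_lt]

lemma weirdG_mul_weirdGSum_div_le {C : ℝ} (hC : 0 ≤ C) {n p : ℕ} (hp : p.Prime) (hp8 : 8 ≤ p)
    (hpn : p * p ≤ n) (hS : weirdGSum (n / p) ≤ C * ((n / p : ℕ) ^ 2 / log (n / p : ℕ) ^ 2)) :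
    weirdG p * weirdGSum (n / p) ≤
      C * (n ^ 2 / log n ^ 2) * (1 / (p * log p) * (log n / log (n / p)) ^ 2) := by
  have hp0 : (0 : ℝ) < p := Nat.cast_pos.2 hp.pos
  have h8 : (8 : ℝ) ≤ p := by exact_mod_cast hp8
  have hpm : (p : ℝ) ≤ (n / p : ℕ) := by exact_mod_cast (Nat.le_div_iff_mul_le hp.pos).2 hpn
  have hmn : ((n / p : ℕ) : ℝ) ≤ n / p := Nat.cast_div_le
  have he : exp 1 ≤ ((n / p : ℕ) : ℝ) := by linarith [exp_one_lt_d9]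
  have hlogp : 0 < log p := log_pos (by linarith)
  have hlognp : 0 < log (n / p) := log_pos (by linarith)
  have hlogn : 0 < log n := log_pos (by exact_mod_cast (by nlinarith : 1 < n))
  calc weirdG p * weirdGSum (n / p) ≤ p / log p * (C * ((n / p) ^ 2 / log (n / p) ^ 2)) :=
        mul_le_mul (weirdG_prime_le hp)
          (hS.trans (mul_le_mul_of_nonneg_left (monotoneOn_sq_div_log_sq he (he.trans hmn) hmn) hC))
          (weirdGSum_nonneg _) (by positivity)
    _ = C * (n ^ 2 / log n ^ 2) * (1 / (p * log p) * (log n / log (n / p)) ^ 2) := by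
        field_simp

lemma sum_weirdG_not_prime_le_of_forall_lt {C : ℝ} (hC : 0 ≤ C) {n : ℕ} (hn : 10 ^ 4 ≤ log n)
    (ih : ∀ m, 2 ≤ m → m < n → weirdGSum m ≤ C * (m ^ 2 / log m ^ 2)) :
    ∑ q ∈ (Icc 2 n).filter (fun q => ¬ q.Prime), weirdG q ≤ 24 / 25 * (C * (n ^ 2 / log n ^ 2)) :=
  calc _ ≤ ∑ p ∈ (Icc 8 n).filter (fun p => p.Prime ∧ p * p ≤ n), weirdG p * weirdGSum (n / p) :=
        sum_weirdG_not_prime_le n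
    _ ≤ ∑ p ∈ (Icc 8 n).filter (fun p => p.Prime ∧ p * p ≤ n),
          C * (n ^ 2 / log n ^ 2) * (1 / (p * log p) * (log n / log (n / p)) ^ 2) := by
        refine sum_le_sum fun p hp => ?_
        simp only [mem_filter, mem_Icc] at hp
        obtain ⟨⟨hp8, hp_le⟩, hpp, hpn⟩ := hp
        refine weirdG_mul_weirdGSum_div_le hC hpp hp8 hpn (ih _ ?_ ?_)
        · exact hpp.two_le.trans ((Nat.le_div_iff_mul_le hpp.pos).2 hpn)
        · exact Nat.div_lt_self (by omega) hpp.one_lt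
    _ = C * (n ^ 2 / log n ^ 2) * ∑ p ∈ (Icc 8 n).filter (fun p => p.Prime ∧ p * p ≤ n),
          1 / (p * log p) * (log n / log (n / p)) ^ 2 := (mul_sum _ _ _).symm
    _ ≤ C * (n ^ 2 / log n ^ 2) * (24 / 25) := by
        refine mul_le_mul_of_nonneg_left (sum_inv_mul_log_mul_sq_le hn fun p hp => ?_)
          (by positivity)
        simp only [mem_filter, mem_Icc] at hp
        exact ⟨hp.2.1, hp.1.1, hp.2.2⟩
    _ = 24 / 25 * (C * (n ^ 2 / log n ^ 2)) := mul_comm _ _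

lemma weirdGSum_le_of_forall_lt {C : ℝ} (hC : 10 ^ 8 ≤ C) {n : ℕ} (hn : 2 ≤ n)
    (ih : ∀ m, 2 ≤ m → m < n → weirdGSum m ≤ C * (m ^ 2 / log m ^ 2)) :
    weirdGSum n ≤ C * (n ^ 2 / log n ^ 2) := by
  set X : ℝ := n ^ 2 / log n ^ 2
  have hlogn : 0 < log n := log_pos (by exact_mod_cast hn)
  have hCX : 10 ^ 8 * X ≤ C * X := by gcongr
  by_cases hL : log n ≤ 10 ^ 4
  · calc weirdGSum n ≤ n ^ 2 := weirdGSum_le_sq n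
      _ = log n ^ 2 * X := by simp only [X]; field_simp
      _ ≤ 10 ^ 8 * X := by gcongr; nlinarith
      _ ≤ C * X := hCX
  · replace hL := (not_le.1 hL).le
    have hX : 1 ≤ X := by
      rw [le_div_iff₀ (by positivity), one_mul]
      exact pow_le_pow_left₀ hlogn.le
        ((log_le_sub_one_of_pos (by positivity)).trans (by linarith)) 2
    have hcomp := sum_weirdG_not_prime_le_of_forall_lt (by linarith) hL ih
    rw [weirdGSum_eq (by omega)]
    nlinarith [sum_weirdG_prime_le n, log_four_lt]

theorem weirdGSum_le {n : ℕ} (hn : 2 ≤ n) : weirdGSum n ≤ 10 ^ 8 * (n ^ 2 / log n ^ 2) := by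
  induction n using Nat.strong_induction_on with
  | _ n ih => exact weirdGSum_le_of_forall_lt le_rfl hn fun m hm hmn => ih m hmn hm

theorem sum_weirdG_bigO :
    ∃ C : ℝ, 0 < C ∧ ∃ x₀ : ℕ, 2 ≤ x₀ ∧ ∀ x : ℕ, x₀ ≤ x →
      ∑ q ∈ Finset.Icc 1 x, weirdG q ≤ C * ((x : ℝ) ^ 2 / (Real.log x) ^ 2) :=
  ⟨10 ^ 8, by norm_num, 2, le_rfl, fun _ hx => weirdGSum_le hx⟩
end

section
/- Define f₂ : ℕ → ℤ by f₂(0) = 1 and f₂(n+1) = 1 − (n+1)f₂(n). Then f₂ is a pseudo-polynomial: for all natural numbers m ≠ n, (m − n) divides f₂(m) − f₂(n). -/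
/-- `f₂(n) = (−1)ⁿ D(n)` where `D(n)` is the number of derangements on `n` letters. -/
def f2 : ℕ → ℤ
  | 0 => 1
  | n + 1 => 1 - (n + 1 : ℤ) * f2 n

lemma f2_eq (m : ℕ) :
    f2 m = ∑ j ∈ Finset.range (m + 1), (-1 : ℤ) ^ j * (m.descFactorial j : ℤ) := by
  induction m with
  | zero => simp [f2]
  | succ m ih =>
    rw [f2, ih,
      Finset.sum_range_succ' (fun j => (-1 : ℤ) ^ j * ((m + 1).descFactorial j : ℤ)) (m + 1)]
    simp only [Nat.succ_descFactorial_succ, Nat.descFactorial_zero, Nat.cast_mul,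
      Nat.cast_one, pow_zero, one_mul, pow_succ, Finset.mul_sum]
    push_cast
    rw [sub_eq_add_neg, add_comm, ← Finset.sum_neg_distrib]
    congr 1
    exact Finset.sum_congr rfl fun x _ => by ring

lemma f2_eq' (m N : ℕ) (h : m ≤ N) :
    f2 m = ∑ j ∈ Finset.range (N + 1), (-1 : ℤ) ^ j * (m.descFactorial j : ℤ) := by
  rw [f2_eq]
  apply Finset.sum_subset
  · exact Finset.range_subset_range.2 (by omega)
  · intro x hx hx'
    simp only [Finset.mem_range] at hx hx'
    rw [Nat.descFactorial_eq_zero_iff_lt.2 (by omega)]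
    simp

lemma desc_dvd (j m n : ℕ) (h : n ≤ m) :
    ((m : ℤ) - n) ∣ ((m.descFactorial j : ℤ) - (n.descFactorial j : ℤ)) := by
  induction j with
  | zero => simp
  | succ j ih =>
    rw [Nat.descFactorial_succ, Nat.descFactorial_succ]
    push_cast
    by_cases hj : j ≤ n
    · have e1 : ((m - j : ℕ) : ℤ) = (m : ℤ) - j := by omega
      have e2 : ((n - j : ℕ) : ℤ) = (n : ℤ) - j := by omega
      rw [e1, e2]
      have : ((m : ℤ) - j) * (m.descFactorial j : ℤ) - ((n : ℤ) - j) * (n.descFactorial j : ℤ)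
          = ((m : ℤ) - n) * (n.descFactorial j : ℤ)
            + ((m : ℤ) - j) * ((m.descFactorial j : ℤ) - (n.descFactorial j : ℤ)) := by ring
      rw [this]
      exact dvd_add (Dvd.intro _ rfl) (Dvd.dvd.mul_left ih _)
    · have hB : (n.descFactorial j : ℤ) = 0 := by
        rw [Nat.descFactorial_eq_zero_iff_lt.2 (by omega)]; rfl
      rw [hB, sub_zero] at ih
      rw [hB, mul_zero, sub_zero]
      exact Dvd.dvd.mul_left ih _

lemma f2_dvd_le (m n : ℕ) (h : n ≤ m) : ((m : ℤ) - (n : ℤ)) ∣ f2 m - f2 n := by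
  rw [f2_eq' m m le_rfl, f2_eq' n m h, ← Finset.sum_sub_distrib]
  apply Finset.dvd_sum
  intro j _
  rw [← mul_sub]
  exact Dvd.dvd.mul_left (desc_dvd j m n h) _

theorem f2_pseudoPolynomial (m n : ℕ) (hmn : m ≠ n) :
    ((m : ℤ) - (n : ℤ)) ∣ f2 m - f2 n := by
  rcases le_total n m with h | h
  · exact f2_dvd_le m n h
  · have := f2_dvd_le n m h
    rw [show (m : ℤ) - n = -((n : ℤ) - m) by ring, show f2 m - f2 n = -(f2 n - f2 m) by ring]
    exact (neg_dvd.2 this).neg_right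
end

section
/- Let q ∈ 𝒬 with sets A_d built via CRT, and for a divisor structure write {h,q} = ∏_{p^v ∥ q} {h,p^v} where {h,p^v} = 1 if h ≡ 0 mod p^v and p^v otherwise, for nonzero h ∈ ℤ^n. Then for any H ≥ 2: ∑_{0 < ‖h‖ ≤ H, {h,q} = d} 1/M(h) ≤ (d/q) ∑_{0 < ‖h‖ ≤ H} 1/M(h) ≪ (d/q)(log H)^n, where ‖h‖ = max|hᵢ| and M(h) = ∏ᵢ max(1,|hᵢ|), and d | q with (d, q/d) = 1. -/
open Finset

/-- `{h,q} = ∏_{p^v ∥ q} {h,p^v}`, where `{h,p^v} = 1` if all coordinates of `h` are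
divisible by `p^v` and `{h,p^v} = p^v` otherwise. -/
def crtWeight (n q : ℕ) (h : Fin n → ℤ) : ℕ :=
  ∏ p ∈ q.primeFactors,
    if ∀ i, ((p ^ (q.factorization p) : ℕ) : ℤ) ∣ h i then 1 else p ^ (q.factorization p)

lemma dvd_of_crtWeight {n q d : ℕ} (hq : 0 < q) (hd : d ∣ q) (hcop : Nat.Coprime d (q/d))
    {h : Fin n → ℤ} (hw : crtWeight n q h = d) (i : Fin n) : ((q/d : ℕ) : ℤ) ∣ h i := by
  classical
  set m := q / d with hm
  have hmq : m ∣ q := Nat.div_dvd_of_dvd hd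
  have hm0 : m ≠ 0 := by
    have : 0 < m := Nat.div_pos (Nat.le_of_dvd hq hd) (Nat.pos_of_dvd_of_pos hd hq)
    omega
  have key : ∀ p ∈ m.primeFactors, ((p ^ m.factorization p : ℕ) : ℤ) ∣ h i := by
    intro p hp
    have hpprime : p.Prime := Nat.prime_of_mem_primeFactors hp
    have hpq : p ∈ q.primeFactors := (Nat.mem_primeFactors_of_ne_zero hq.ne').mpr
      ⟨hpprime, (Nat.dvd_of_mem_primeFactors hp).trans hmq⟩
    have hcond : ∀ j, ((p ^ (q.factorization p) : ℕ) : ℤ) ∣ h j := by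
      by_contra hc
      have hdvd : p ^ (q.factorization p) ∣ d := by
        rw [← hw, crtWeight]
        have := Finset.dvd_prod_of_mem
          (fun p => if ∀ j, ((p ^ (q.factorization p) : ℕ) : ℤ) ∣ h j then 1
            else p ^ (q.factorization p)) hpq
        beta_reduce at this
        rwa [if_neg hc] at this
      have hpd : p ∣ d := dvd_trans
        (dvd_pow_self p (Finsupp.mem_support_iff.mp (Nat.support_factorization q ▸ hpq))) hdvd
      have hpm : p ∣ m := Nat.dvd_of_mem_primeFactors hp
      have : p ∣ Nat.gcd d m := Nat.dvd_gcd hpd hpm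
      rw [hcop] at this
      exact hpprime.one_lt.ne' (Nat.eq_one_of_dvd_one this) |>.elim
    have hle : m.factorization p ≤ q.factorization p :=
      (Nat.factorization_le_iff_dvd hm0 hq.ne').mpr hmq p
    exact dvd_trans (by exact_mod_cast pow_dvd_pow (p:ℤ) hle) (hcond i)
  have hmeq : ((m : ℕ) : ℤ) = ∏ p ∈ m.primeFactors, ((p ^ m.factorization p : ℕ) : ℤ) := by
    rw [← Nat.cast_prod]
    congr 1
    conv_lhs => rw [← Nat.factorization_prod_pow_eq_self hm0]
    rw [Nat.prod_factorization_eq_prod_primeFactors]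
  rw [hmeq]
  apply Finset.prod_dvd_of_coprime _ key
  intro p hp p' hp' hne
  have hpp : (p:ℕ).Prime := Nat.prime_of_mem_primeFactors hp
  have hpp' : (p':ℕ).Prime := Nat.prime_of_mem_primeFactors hp'
  have : Nat.Coprime (p ^ m.factorization p) (p' ^ m.factorization p') :=
    Nat.Coprime.pow _ _ ((Nat.coprime_primes hpp hpp').mpr hne)
  simpa [Function.onFun, Int.coe_gcd] using (Nat.isCoprime_iff_coprime).mpr this

lemma prod_max_mul_le {n : ℕ} (m : ℕ) (hm : 1 ≤ m) (k : Fin n → ℤ) (hk : k ≠ 0) :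
    (m : ℝ) * ∏ i, max 1 |(k i : ℝ)| ≤ ∏ i, max 1 |((m : ℤ) * k i : ℝ)| := by
  obtain ⟨i0, hi0⟩ : ∃ i, k i ≠ 0 := Function.ne_iff.mp hk
  have hm1 : (1:ℝ) ≤ m := by exact_mod_cast hm
  have hki : (1:ℝ) ≤ |(k i0 : ℝ)| := by
    have h1 : (1:ℤ) ≤ |k i0| := Int.one_le_abs hi0
    exact_mod_cast h1
  rw [← Finset.mul_prod_erase univ _ (mem_univ i0),
      ← Finset.mul_prod_erase univ (fun i => max 1 |((m : ℤ) * k i : ℝ)|) (mem_univ i0),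
      ← mul_assoc]
  have h1 : (m:ℝ) * max 1 |(k i0 : ℝ)| ≤ max 1 |((m : ℤ) * k i0 : ℝ)| := by
    have habs : |((m : ℤ) * k i0 : ℝ)| = (m:ℝ) * |(k i0 : ℝ)| := by
      push_cast
      rw [abs_mul, abs_of_nonneg (by positivity : (0:ℝ) ≤ (m:ℝ))]
    have he : (m:ℝ) * max 1 |(k i0:ℝ)| = (m:ℝ) * |(k i0:ℝ)| := by rw [max_eq_right hki]
    rw [habs, he]
    exact le_max_right _ _
  refine mul_le_mul h1 (Finset.prod_le_prod (fun i _ => by positivity) (fun i _ => ?_))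
    (Finset.prod_nonneg (fun i _ => by positivity)) (by positivity)
  have : |(k i : ℝ)| ≤ |((m : ℤ) * k i : ℝ)| := by
    push_cast
    rw [abs_mul, abs_of_nonneg (by positivity : (0:ℝ) ≤ (m:ℝ))]
    nlinarith [abs_nonneg ((k i : ℝ))]
  exact max_le_max le_rfl this

lemma sum_Icc_le (N : ℕ) :
    ∑ x ∈ Finset.Icc (-(N:ℤ)) N, (max 1 |(x : ℝ)|)⁻¹ ≤ 1 + 2 * (harmonic N : ℝ) := by
  induction N with
  | zero => simp [harmonic]
  | succ N ih =>
    have hset : Finset.Icc (-((N+1:ℕ):ℤ)) ((N+1:ℕ):ℤ) =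
        insert (-((N:ℤ)+1)) (insert ((N:ℤ)+1) (Finset.Icc (-(N:ℤ)) N)) := by
      ext x; simp only [Finset.mem_Icc, Finset.mem_insert]; push_cast; omega
    have h1 : -((N:ℤ)+1) ∉ insert ((N:ℤ)+1) (Finset.Icc (-(N:ℤ)) (N:ℤ)) := by
      simp only [Finset.mem_Icc, Finset.mem_insert]; omega
    have h2 : ((N:ℤ)+1) ∉ Finset.Icc (-(N:ℤ)) (N:ℤ) := by
      simp only [Finset.mem_Icc]; omega
    rw [hset, Finset.sum_insert h1, Finset.sum_insert h2]
    have hge : (1:ℝ) ≤ (N:ℝ)+1 := le_add_of_nonneg_left (Nat.cast_nonneg N)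
    have e1 : (max 1 |(-((N:ℝ)+1))|)⁻¹ = ((N:ℝ)+1)⁻¹ := by
      rw [abs_neg, abs_of_nonneg (by positivity), max_eq_right hge]
    have e2 : (max 1 |((N:ℝ)+1)|)⁻¹ = ((N:ℝ)+1)⁻¹ := by
      rw [abs_of_nonneg (by positivity), max_eq_right hge]
    rw [harmonic_succ]
    push_cast
    rw [e1, e2]
    linarith

theorem sum_inv_M_restricted_le (n : ℕ) (hn : 1 ≤ n) :
    ∃ C : ℝ, 0 < C ∧ ∀ q d : ℕ, 0 < q → d ∣ q → Nat.Coprime d (q / d) →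
      ∀ H : ℝ, 2 ≤ H →
      (∑ h ∈ (Finset.Icc (fun _ : Fin n => -(⌊H⌋ : ℤ))
            (fun _ : Fin n => (⌊H⌋ : ℤ))).filter
            (fun h => h ≠ 0 ∧ crtWeight n q h = d),
          (∏ i, max 1 |(h i : ℝ)|)⁻¹) ≤
        ((d : ℝ) / q) *
          ∑ h ∈ (Finset.Icc (fun _ : Fin n => -(⌊H⌋ : ℤ))
              (fun _ : Fin n => (⌊H⌋ : ℤ))).filter (fun h => h ≠ 0),
            (∏ i, max 1 |(h i : ℝ)|)⁻¹ ∧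
      (∑ h ∈ (Finset.Icc (fun _ : Fin n => -(⌊H⌋ : ℤ))
            (fun _ : Fin n => (⌊H⌋ : ℤ))).filter
            (fun h => h ≠ 0 ∧ crtWeight n q h = d),
          (∏ i, max 1 |(h i : ℝ)|)⁻¹) ≤
        C * ((d : ℝ) / q) * (Real.log H) ^ n := by
  classical
  have hlog2 : 0 < Real.log 2 := Real.log_pos (by norm_num)
  set c : ℝ := 3 / Real.log 2 + 2 with hc
  have hcpos : 0 < c := by positivity
  refine ⟨c ^ n, pow_pos hcpos n, ?_⟩
  intro q d hq hd hcop H hH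
  set B : ℤ := ⌊H⌋ with hBdef
  have hB2 : (2:ℤ) ≤ B := by
    have := Int.le_floor.mpr (show ((2:ℤ):ℝ) ≤ H by exact_mod_cast hH)
    exact this
  set g : (Fin n → ℤ) → ℝ := fun h => (∏ i, max 1 |(h i : ℝ)|)⁻¹ with hg
  have hgnonneg : ∀ h, 0 ≤ g h := fun h => by
    rw [hg]; positivity
  set box := Finset.Icc (fun _ : Fin n => -B) (fun _ : Fin n => B) with hbox
  set S := box.filter (fun h => h ≠ 0 ∧ crtWeight n q h = d) with hS
  set T := box.filter (fun h => h ≠ 0) with hT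
  set m := q / d with hmdef
  have hd0 : 0 < d := Nat.pos_of_dvd_of_pos hd hq
  have hm1 : 1 ≤ m := Nat.div_pos (Nat.le_of_dvd hq hd) hd0
  have hdq : (d:ℝ)/q = ((m:ℕ):ℝ)⁻¹ := by
    have hqm : (m * d : ℕ) = q := by rw [hmdef, Nat.div_mul_cancel hd]
    rw [← hqm]
    push_cast
    rw [mul_comm]
    field_simp
  -- main comparison
  have hmain : ∑ h ∈ S, g h ≤ ((d:ℝ)/q) * ∑ h ∈ T, g h := by
    rw [hdq]
    set φ : (Fin n → ℤ) → (Fin n → ℤ) := fun h i => h i / (m:ℤ) with hφ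
    have hrec : ∀ h ∈ S, ∀ i, h i = (m:ℤ) * φ h i := by
      intro h hh i
      have hdvd := dvd_of_crtWeight hq hd hcop (Finset.mem_filter.mp hh).2.2 i
      exact (Int.mul_ediv_cancel' hdvd).symm
    have hφne : ∀ h ∈ S, φ h ≠ 0 := by
      intro h hh hc0
      apply (Finset.mem_filter.mp hh).2.1
      funext i
      rw [hrec h hh i, hc0]
      simp
    have step1 : ∑ h ∈ S, g h ≤ ∑ h ∈ S, ((m:ℕ):ℝ)⁻¹ * g (φ h) := by
      apply Finset.sum_le_sum
      intro h hh
      have hpe : ∏ i, max 1 |(h i : ℝ)| = ∏ i, max 1 |((m:ℤ) * φ h i : ℝ)| := by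
        apply Finset.prod_congr rfl
        intro i _
        rw [hrec h hh i]
        push_cast
        ring_nf
      have hkey := prod_max_mul_le m hm1 (φ h) (hφne h hh)
      have hPpos : 0 < ∏ i, max 1 |(φ h i : ℝ)| := by positivity
      have hmpos : (0:ℝ) < m := by exact_mod_cast hm1
      rw [hg]
      beta_reduce
      rw [hpe, ← mul_inv]
      exact inv_anti₀ (by positivity) hkey
    have hinj : Set.InjOn φ S := by
      intro h hh h' hh' he
      funext i
      rw [hrec h hh i, hrec h' hh' i, he]
    have step2 : ∑ h ∈ S, g (φ h) = ∑ k ∈ S.image φ, g k :=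
      (Finset.sum_image (fun x hx y hy hxy => hinj hx hy hxy)).symm
    have himg : S.image φ ⊆ T := by
      intro k hk
      obtain ⟨h, hh, rfl⟩ := Finset.mem_image.mp hk
      have hhbox := (Finset.mem_filter.mp hh).1
      rw [hbox, Finset.mem_Icc] at hhbox
      rw [hT, Finset.mem_filter]
      refine ⟨?_, hφne h hh⟩
      rw [hbox, Finset.mem_Icc]
      constructor <;> intro i
      · have h1 := hhbox.1 i
        have h2 := hhbox.2 i
        have := hrec h hh i
        simp only at h1 h2 ⊢
        have hmZ : (1:ℤ) ≤ (m:ℤ) := by exact_mod_cast hm1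
        nlinarith [abs_nonneg (φ h i), le_abs_self (φ h i), neg_abs_le (φ h i),
          le_abs_self (h i), neg_abs_le (h i)]
      · have h1 := hhbox.1 i
        have h2 := hhbox.2 i
        have := hrec h hh i
        simp only at h1 h2 ⊢
        have hmZ : (1:ℤ) ≤ (m:ℤ) := by exact_mod_cast hm1
        nlinarith [abs_nonneg (φ h i), le_abs_self (φ h i), neg_abs_le (φ h i),
          le_abs_self (h i), neg_abs_le (h i)]
    calc ∑ h ∈ S, g h ≤ ∑ h ∈ S, ((m:ℕ):ℝ)⁻¹ * g (φ h) := step1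
      _ = ((m:ℕ):ℝ)⁻¹ * ∑ h ∈ S, g (φ h) := by rw [Finset.mul_sum]
      _ = ((m:ℕ):ℝ)⁻¹ * ∑ k ∈ S.image φ, g k := by rw [step2]
      _ ≤ ((m:ℕ):ℝ)⁻¹ * ∑ k ∈ T, g k := by
          apply mul_le_mul_of_nonneg_left _ (by positivity)
          exact Finset.sum_le_sum_of_subset_of_nonneg himg (fun k _ _ => hgnonneg k)
  -- full sum bound
  have hTle : ∑ h ∈ T, g h ≤ (c * Real.log H) ^ n := by
    have hsub : ∑ h ∈ T, g h ≤ ∑ h ∈ box, g h :=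
      Finset.sum_le_sum_of_subset_of_nonneg (Finset.filter_subset _ _)
        (fun k _ _ => hgnonneg k)
    have hfact : ∑ h ∈ box, g h
        = ∏ _i : Fin n, ∑ x ∈ Finset.Icc (-B) B, (max 1 |(x : ℝ)|)⁻¹ := by
      rw [hbox, hg]
      simp_rw [← Finset.prod_inv_distrib]
      rw [Finset.prod_univ_sum]
      apply Finset.sum_congr _ (fun _ _ => rfl)
      ext h
      simp [Fintype.mem_piFinset, Finset.mem_Icc, Pi.le_def, forall_and]
    have hBtoNat : ((B.toNat : ℕ) : ℤ) = B := Int.toNat_of_nonneg (by omega)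
    have hcoord : ∑ x ∈ Finset.Icc (-B) B, (max 1 |(x : ℝ)|)⁻¹ ≤ c * Real.log H := by
      have h1 : ∑ x ∈ Finset.Icc (-B) B, (max 1 |(x : ℝ)|)⁻¹
          ≤ 1 + 2 * (harmonic B.toNat : ℝ) := by
        have := sum_Icc_le B.toNat
        rwa [hBtoNat] at this
      have h2 : (harmonic B.toNat : ℝ) ≤ 1 + Real.log B.toNat :=
        harmonic_le_one_add_log B.toNat
      have hBH : ((B.toNat : ℕ) : ℝ) ≤ H := by
        have : ((B:ℤ) : ℝ) ≤ H := Int.floor_le H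
        calc ((B.toNat : ℕ) : ℝ) = ((B:ℤ) : ℝ) := by rw [← hBtoNat]; norm_cast
          _ ≤ H := this
      have hBpos : (0:ℝ) < ((B.toNat : ℕ) : ℝ) := by
        have : (2:ℕ) ≤ B.toNat := by omega
        exact_mod_cast Nat.lt_of_lt_of_le (by norm_num) this
      have h3 : Real.log B.toNat ≤ Real.log H := Real.log_le_log hBpos hBH
      have hlogH : Real.log 2 ≤ Real.log H :=
        Real.log_le_log (by norm_num) hH
      have : (3:ℝ) ≤ (3 / Real.log 2) * Real.log H := by
        rw [div_mul_eq_mul_div, le_div_iff₀ hlog2]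
        nlinarith
      rw [hc]
      nlinarith
    have hcoordnn : ∀ i : Fin n, (0:ℝ) ≤ ∑ x ∈ Finset.Icc (-B) B, (max 1 |(x : ℝ)|)⁻¹ :=
      fun _ => Finset.sum_nonneg (fun x _ => by positivity)
    calc ∑ h ∈ T, g h ≤ ∑ h ∈ box, g h := hsub
      _ = ∏ _i : Fin n, ∑ x ∈ Finset.Icc (-B) B, (max 1 |(x : ℝ)|)⁻¹ := hfact
      _ ≤ ∏ _i : Fin n, (c * Real.log H) :=
          Finset.prod_le_prod (fun i _ => hcoordnn i) (fun i _ => hcoord)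
      _ = (c * Real.log H) ^ n := by rw [Finset.prod_const, Finset.card_univ, Fintype.card_fin]
  have hdqnn : (0:ℝ) ≤ (d:ℝ)/q := by positivity
  refine ⟨hmain, ?_⟩
  calc ∑ h ∈ S, g h ≤ ((d:ℝ)/q) * ∑ h ∈ T, g h := hmain
    _ ≤ ((d:ℝ)/q) * (c * Real.log H) ^ n := mul_le_mul_of_nonneg_left hTle hdqnn
    _ = c ^ n * ((d:ℝ)/q) * (Real.log H) ^ n := by rw [mul_pow]; ring
end

section
/- Suppose a, b are nonnegative reals with a ≤ b, b ≥ 2, and let k ≥ 1 be an integer with k ≤ 2a − 1 ≤ 2b. Then the maximum over 0 ≤ j ≤ k−1 of a^j / j! is attained at some j₀ with (k−1)/2 ≤ j₀ ≤ k−1, and for this j₀ one has (a^{j₀}/j₀!) · ((k−1)!/b^{k−1}) ≤ (a/b)^{(k−1)/2} whenever k ≤ b. -/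
private lemma fact_le_pow_aux (b : ℝ) (hb : 0 ≤ b) :
    ∀ m n : ℕ, n ≤ m → (m : ℝ) ≤ b →
      (Nat.factorial m : ℝ) ≤ (Nat.factorial n : ℝ) * b ^ (m - n) := by
  intro m
  induction m with
  | zero => intro n hn _; interval_cases n; simp
  | succ m ih =>
    intro n hn hmb
    rcases Nat.eq_or_lt_of_le hn with h | h
    · subst h; simp
    · have hn' : n ≤ m := Nat.lt_succ_iff.mp h
      have hmb' : (m : ℝ) ≤ b := by
        refine le_trans ?_ hmb; exact_mod_cast Nat.le_succ m
      have hih := ih n hn' hmb'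
      have hsub : m + 1 - n = (m - n) + 1 := by omega
      rw [hsub, pow_succ]
      calc (Nat.factorial (m+1) : ℝ) = ((m:ℝ)+1) * Nat.factorial m := by
            push_cast [Nat.factorial_succ]; ring
        _ ≤ b * ((Nat.factorial n : ℝ) * b ^ (m-n)) := by
            refine mul_le_mul (by exact_mod_cast hmb) hih (by positivity) hb
        _ = (Nat.factorial n : ℝ) * (b ^ (m-n) * b) := by ring

private lemma pdf_step_up (a : ℝ) (ha : 0 ≤ a) (m : ℕ) (h : (m : ℝ) + 1 ≤ a) :
    a ^ m / (Nat.factorial m : ℝ) ≤ a ^ (m+1) / (Nat.factorial (m+1) : ℝ) := by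
  have hf : (0:ℝ) < Nat.factorial m := by exact_mod_cast Nat.factorial_pos m
  have hf1 : (0:ℝ) < Nat.factorial (m+1) := by exact_mod_cast Nat.factorial_pos (m+1)
  rw [div_le_div_iff₀ hf hf1]
  have : (Nat.factorial (m+1) : ℝ) = ((m:ℝ)+1) * Nat.factorial m := by
    push_cast [Nat.factorial_succ]; ring
  rw [this, pow_succ]
  have hnn : 0 ≤ a ^ m * (Nat.factorial m : ℝ) := mul_nonneg (pow_nonneg ha m) hf.le
  nlinarith [mul_le_mul_of_nonneg_left h hnn]

private lemma pdf_step_down (a : ℝ) (ha : 0 ≤ a) (m : ℕ) (h : a ≤ (m : ℝ) + 1) :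
    a ^ (m+1) / (Nat.factorial (m+1) : ℝ) ≤ a ^ m / (Nat.factorial m : ℝ) := by
  have hf : (0:ℝ) < Nat.factorial m := by exact_mod_cast Nat.factorial_pos m
  have hf1 : (0:ℝ) < Nat.factorial (m+1) := by exact_mod_cast Nat.factorial_pos (m+1)
  rw [div_le_div_iff₀ hf1 hf]
  have : (Nat.factorial (m+1) : ℝ) = ((m:ℝ)+1) * Nat.factorial m := by
    push_cast [Nat.factorial_succ]; ring
  rw [this, pow_succ]
  have hnn : 0 ≤ a ^ m * (Nat.factorial m : ℝ) := mul_nonneg (pow_nonneg ha m) hf.le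
  nlinarith [mul_le_mul_of_nonneg_left h hnn]

private lemma pdf_mono_up (a : ℝ) (ha : 0 ≤ a) :
    ∀ d m : ℕ, ((m + d : ℕ) : ℝ) ≤ a →
      a ^ m / (Nat.factorial m : ℝ) ≤ a ^ (m + d) / (Nat.factorial (m + d) : ℝ) := by
  intro d
  induction d with
  | zero => intro m _; simp
  | succ d ih =>
    intro m hma
    have h1 : ((m + d : ℕ) : ℝ) ≤ a := by
      refine le_trans ?_ hma; exact_mod_cast Nat.le_succ (m + d)
    have h2 : ((m + d : ℕ) : ℝ) + 1 ≤ a := by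
      have : ((m + (d+1) : ℕ) : ℝ) = ((m + d : ℕ) : ℝ) + 1 := by push_cast; ring
      linarith [this ▸ hma]
    calc a ^ m / (Nat.factorial m : ℝ) ≤ a ^ (m + d) / (Nat.factorial (m + d) : ℝ) :=
          ih m h1
      _ ≤ a ^ (m + d + 1) / (Nat.factorial (m + d + 1) : ℝ) := pdf_step_up a ha _ h2
      _ = a ^ (m + (d+1)) / (Nat.factorial (m + (d+1)) : ℝ) := by ring_nf

private lemma pdf_mono_down (a : ℝ) (ha : 0 ≤ a) (m : ℕ) (hm : a ≤ (m : ℝ) + 1) :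
    ∀ d : ℕ, a ^ (m + d) / (Nat.factorial (m + d) : ℝ) ≤ a ^ m / (Nat.factorial m : ℝ) := by
  intro d
  induction d with
  | zero => simp
  | succ d ih =>
    have h2 : a ≤ ((m + d : ℕ) : ℝ) + 1 := by
      have : (m:ℝ) ≤ ((m + d : ℕ) : ℝ) := by exact_mod_cast Nat.le_add_right m d
      linarith
    calc a ^ (m + (d+1)) / (Nat.factorial (m + (d+1)) : ℝ)
        = a ^ (m + d + 1) / (Nat.factorial (m + d + 1) : ℝ) := by ring_nf
      _ ≤ a ^ (m + d) / (Nat.factorial (m + d) : ℝ) := pdf_step_down a ha _ h2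
      _ ≤ a ^ m / (Nat.factorial m : ℝ) := ih

theorem max_pow_div_factorial (a b : ℝ) (ha : 0 ≤ a) (hab : a ≤ b) (hb : 2 ≤ b)
    (k : ℕ) (hk : 1 ≤ k) (hka : (k : ℝ) ≤ 2 * a - 1) (hab2 : 2 * a - 1 ≤ 2 * b) :
    ∃ j₀ : ℕ, j₀ ≤ k - 1 ∧ ((k : ℝ) - 1) / 2 ≤ (j₀ : ℝ) ∧
      (∀ j : ℕ, j ≤ k - 1 →
        a ^ j / (Nat.factorial j : ℝ) ≤ a ^ j₀ / (Nat.factorial j₀ : ℝ)) ∧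
      ((k : ℝ) ≤ b →
        (a ^ j₀ / (Nat.factorial j₀ : ℝ)) * ((Nat.factorial (k - 1) : ℝ) / b ^ (k - 1)) ≤
          (a / b) ^ (((k : ℝ) - 1) / 2)) := by
  have hk1 : (1:ℝ) ≤ (k:ℝ) := by exact_mod_cast hk
  have ha1 : 1 ≤ a := by linarith
  have hb0 : (0:ℝ) < b := by linarith
  set K := k - 1 with hK
  have hKcast : (K : ℝ) = (k : ℝ) - 1 := by
    have : (K : ℕ) + 1 = k := by omega
    have := congrArg (Nat.cast (R := ℝ)) this
    push_cast at this; linarith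
  refine ⟨min K ⌊a⌋₊, min_le_left _ _, ?_, ?_, ?_⟩
  · -- (k-1)/2 ≤ j₀
    have h1 : ((k:ℝ) - 1) / 2 ≤ (K : ℝ) := by rw [hKcast]; linarith
    have h2 : ((k:ℝ) - 1) / 2 ≤ (⌊a⌋₊ : ℝ) := by
      have hfl : a - 1 < (⌊a⌋₊ : ℝ) := by
        have := Nat.lt_floor_add_one a; linarith
      linarith
    rcases le_total (K : ℕ) ⌊a⌋₊ with h | h
    · rwa [min_eq_left h]
    · rwa [min_eq_right h]
  · -- maximality
    intro j hj
    rcases le_or_gt j (min K ⌊a⌋₊) with hle | hlt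
    · obtain ⟨d, hd⟩ := Nat.exists_eq_add_of_le hle
      have hcast : ((min K ⌊a⌋₊ : ℕ) : ℝ) ≤ a := by
        calc ((min K ⌊a⌋₊ : ℕ) : ℝ) ≤ (⌊a⌋₊ : ℝ) := by exact_mod_cast min_le_right _ _
          _ ≤ a := Nat.floor_le ha
      have := pdf_mono_up a ha d j (by rw [← hd]; exact hcast)
      rwa [← hd] at this
    · -- j₀ < j ≤ K, so j₀ = ⌊a⌋₊
      have hmin : min K ⌊a⌋₊ = ⌊a⌋₊ := by
        rcases le_total (K : ℕ) ⌊a⌋₊ with h | h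
        · omega
        · exact min_eq_right h
      rw [hmin] at hlt ⊢
      have hfl : ⌊a⌋₊ ≤ j := hlt.le
      obtain ⟨d, hd⟩ := Nat.exists_eq_add_of_le hfl
      have hup : a ≤ (⌊a⌋₊ : ℝ) + 1 := (Nat.lt_floor_add_one a).le
      have := pdf_mono_down a ha ⌊a⌋₊ hup d
      rwa [← hd] at this
  · -- final inequality
    intro hkb
    set j₀ := min K ⌊a⌋₊ with hj₀
    have hjK : j₀ ≤ K := min_le_left _ _
    have hKb : (K : ℝ) ≤ b := by rw [hKcast]; linarith
    have hfact := fact_le_pow_aux b hb0.le K j₀ hjK hKb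
    have hfj : (0:ℝ) < Nat.factorial j₀ := by exact_mod_cast Nat.factorial_pos j₀
    have hbK : (0:ℝ) < b ^ K := by positivity
    have hsplit : b ^ K = b ^ j₀ * b ^ (K - j₀) := by
      rw [← pow_add]; congr 1; omega
    have han : 0 ≤ a ^ j₀ := pow_nonneg ha j₀
    have step1 : (a ^ j₀ / (Nat.factorial j₀ : ℝ)) * ((Nat.factorial K : ℝ) / b ^ K)
        ≤ (a / b) ^ (j₀ : ℝ) := by
      have h1 : (a ^ j₀ / (Nat.factorial j₀ : ℝ)) * ((Nat.factorial K : ℝ) / b ^ K)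
          ≤ (a ^ j₀ / (Nat.factorial j₀ : ℝ)) * (((Nat.factorial j₀ : ℝ) * b ^ (K - j₀)) / b ^ K) := by
        gcongr
      have h2 : (a ^ j₀ / (Nat.factorial j₀ : ℝ)) * (((Nat.factorial j₀ : ℝ) * b ^ (K - j₀)) / b ^ K)
          = (a / b) ^ (j₀ : ℕ) := by
        rw [hsplit, div_pow]
        field_simp
      rw [Real.rpow_natCast, ← h2]
      exact h1
    have step2 : (a / b) ^ (j₀ : ℝ) ≤ (a / b) ^ (((k : ℝ) - 1) / 2) := by
      apply Real.rpow_le_rpow_of_exponent_ge (by positivity) (div_le_one_of_le₀ hab hb0.le)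
      -- (k-1)/2 ≤ j₀
      have h2 : ((k:ℝ) - 1) / 2 ≤ (⌊a⌋₊ : ℝ) := by
        have := Nat.lt_floor_add_one a; linarith
      have h1 : ((k:ℝ) - 1) / 2 ≤ (K : ℝ) := by rw [hKcast]; linarith
      rcases le_total (K : ℕ) ⌊a⌋₊ with h | h
      · rw [hj₀, min_eq_left h]; exact h1
      · rw [hj₀, min_eq_right h]; exact h2
    exact le_trans step1 step2
end
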